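/- arXiv:2112.13832 — 3 statements merged into one kernel-verified Lean document; each statement's English description precedes it below -/
import Mathlib

section
/- Let n, m be positive integers, and for each i ∈ {1,...,m} let A_i, B_i ⊆ {1,...,n} with B_i nonempty. Suppose there is a set S ⊆ {1,...,n} and a constant α > 0 such that for at least an α-fraction of indices i, either (A_i ⊆ S and B_i ∩ S = ∅) or (A_i ∩ S = ∅ and B_i ⊆ S). Then for any estimator f taking as input the restriction of x to A_i together with (A_i, B_i), there exists x ∈ ℝⁿ with ‖x‖_∞ ≤ 1 such that (1/m) Σ_{i=1}^m (f(x_{A_i}, A_i, B_i) − mean(x_{B_i}))² ≥ α/4. -/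
open Finset

/-- The restriction of `x` to the coordinates in `A` (zero outside `A`). -/
def restrict {n : ℕ} (x : Fin n → ℝ) (A : Finset (Fin n)) : Fin n → ℝ :=
  fun j => if j ∈ A then x j else 0

/-- Any estimator has worst-case expected squared error at least `α/4` on an
`α`-non-expanding sample-target distribution. -/
theorem nonexpanding_lower_bound
    (n m : ℕ) (hn : 0 < n) (hm : 0 < m)
    (A B : Fin m → Finset (Fin n))
    (hB : ∀ i, (B i).Nonempty)
    (S : Finset (Fin n)) (α : ℝ) (hα : 0 < α)
    (hfrac : α * m ≤
      (univ.filter (fun i =>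
        (A i ⊆ S ∧ B i ∩ S = ∅) ∨ (A i ∩ S = ∅ ∧ B i ⊆ S))).card)
    (f : (Fin n → ℝ) → Finset (Fin n) → Finset (Fin n) → ℝ) :
    ∃ x : Fin n → ℝ, (∀ j, |x j| ≤ 1) ∧
      (1 / (m : ℝ)) * ∑ i : Fin m,
        (f (restrict x (A i)) (A i) (B i)
          - (∑ j ∈ B i, x j) / (B i).card) ^ 2 ≥ α / 4 := by
  classical
  set good := (univ.filter (fun i : Fin m =>
        (A i ⊆ S ∧ B i ∩ S = ∅) ∨ (A i ∩ S = ∅ ∧ B i ⊆ S))) with hgooddef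
  set X : ℝ → ℝ → Fin n → ℝ := fun s t j => if j ∈ S then s else t with hX
  set T : ℝ → ℝ → Fin m → ℝ := fun s t i =>
      (f (restrict (X s t) (A i)) (A i) (B i)
        - (∑ j ∈ B i, X s t j) / (B i).card) ^ 2 with hT
  set E : ℝ → ℝ → ℝ := fun s t => ∑ i : Fin m, T s t i with hE
  have hbound : ∀ s t, |s| ≤ 1 → |t| ≤ 1 → ∀ j, |X s t j| ≤ 1 := by
    intro s t hs ht j
    simp only [hX]
    split <;> assumption
  -- means
  have hmean1 : ∀ (i : Fin m) (s t : ℝ), B i ∩ S = ∅ →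
      (∑ j ∈ B i, X s t j) / (B i).card = t := by
    intro i s t hBS
    have hcard : ((B i).card : ℝ) ≠ 0 := Nat.cast_ne_zero.mpr (hB i).card_pos.ne'
    have : ∑ j ∈ B i, X s t j = (B i).card * t := by
      rw [Finset.sum_congr rfl (fun j hj => ?_), Finset.sum_const, nsmul_eq_mul]
      have hjS : j ∉ S := fun hjS =>
        (Finset.eq_empty_iff_forall_notMem.mp hBS j) (Finset.mem_inter.mpr ⟨hj, hjS⟩)
      simp [hX, hjS]
    rw [this]; field_simp
  have hmean2 : ∀ (i : Fin m) (s t : ℝ), B i ⊆ S →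
      (∑ j ∈ B i, X s t j) / (B i).card = s := by
    intro i s t hBS
    have hcard : ((B i).card : ℝ) ≠ 0 := Nat.cast_ne_zero.mpr (hB i).card_pos.ne'
    have : ∑ j ∈ B i, X s t j = (B i).card * s := by
      rw [Finset.sum_congr rfl (fun j hj => ?_), Finset.sum_const, nsmul_eq_mul]
      simp [hX, hBS hj]
    rw [this]; field_simp
  -- restriction invariance
  have hres1 : ∀ (i : Fin m) (s t t' : ℝ), A i ⊆ S →
      restrict (X s t) (A i) = restrict (X s t') (A i) := by
    intro i s t t' hAS
    funext j
    by_cases hj : j ∈ A i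
    · simp [_root_.restrict, hj, hX, hAS hj]
    · simp [_root_.restrict, hj]
  have hres2 : ∀ (i : Fin m) (s s' t : ℝ), A i ∩ S = ∅ →
      restrict (X s t) (A i) = restrict (X s' t) (A i) := by
    intro i s s' t hAS
    funext j
    have hjS : j ∉ S ∨ j ∉ A i := by
      by_cases hj : j ∈ A i
      · exact Or.inl fun h =>
          (Finset.eq_empty_iff_forall_notMem.mp hAS j) (Finset.mem_inter.mpr ⟨hj, h⟩)
      · exact Or.inr hj
    by_cases hj : j ∈ A i
    · rcases hjS with h | h
      · simp [_root_.restrict, hj, hX, h]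
      · exact absurd hj h
    · simp [_root_.restrict, hj]
  -- per-good-index lower bound on the four-point sum
  have hkey : ∀ i ∈ good, (4 : ℝ) ≤ T 1 1 i + T 1 (-1) i + T (-1) 1 i + T (-1) (-1) i := by
    intro i hi
    rw [hgooddef, Finset.mem_filter] at hi
    rcases hi.2 with ⟨hA, hBS⟩ | ⟨hA, hBS⟩
    · have e1 := hres1 i 1 (-1) 1 hA
      have e2 := hres1 i (-1) (-1) 1 hA
      simp only [hT, hmean1 i _ _ hBS, e1, e2]
      set c1 := f (restrict (X 1 1) (A i)) (A i) (B i)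
      set c2 := f (restrict (X (-1) 1) (A i)) (A i) (B i)
      nlinarith [sq_nonneg c1, sq_nonneg c2, sq_nonneg (c1 - 1), sq_nonneg (c2 + 1)]
    · have e1 := hres2 i (-1) 1 1 hA
      have e2 := hres2 i (-1) 1 (-1) hA
      simp only [hT, hmean2 i _ _ hBS, e1, e2]
      set c1 := f (restrict (X 1 1) (A i)) (A i) (B i)
      set c2 := f (restrict (X 1 (-1)) (A i)) (A i) (B i)
      nlinarith [sq_nonneg c1, sq_nonneg c2]
  have hTnonneg : ∀ s t i, (0 : ℝ) ≤ T s t i := fun s t i => sq_nonneg _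
  have hEnonneg : ∀ s t, (0 : ℝ) ≤ E s t := fun s t =>
    Finset.sum_nonneg fun i _ => hTnonneg s t i
  -- sum over the four combinations
  have hfour : 4 * (α * m) ≤ E 1 1 + E 1 (-1) + E (-1) 1 + E (-1) (-1) := by
    have h1 : E 1 1 + E 1 (-1) + E (-1) 1 + E (-1) (-1)
        = ∑ i : Fin m, (T 1 1 i + T 1 (-1) i + T (-1) 1 i + T (-1) (-1) i) := by
      simp [hE, Finset.sum_add_distrib]
    have h2 : ∑ i ∈ good, (4 : ℝ)
        ≤ ∑ i ∈ good, (T 1 1 i + T 1 (-1) i + T (-1) 1 i + T (-1) (-1) i) :=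
      Finset.sum_le_sum hkey
    have h3 : ∑ i ∈ good, (T 1 1 i + T 1 (-1) i + T (-1) 1 i + T (-1) (-1) i)
        ≤ ∑ i : Fin m, (T 1 1 i + T 1 (-1) i + T (-1) 1 i + T (-1) (-1) i) := by
      apply Finset.sum_le_sum_of_subset_of_nonneg (Finset.subset_univ _)
      intro i _ _
      have := hTnonneg 1 1 i; have := hTnonneg 1 (-1) i
      have := hTnonneg (-1) 1 i; have := hTnonneg (-1) (-1) i
      linarith
    have h4 : ∑ i ∈ good, (4 : ℝ) = 4 * (good.card : ℝ) := by
      rw [Finset.sum_const, nsmul_eq_mul]; ring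
    have h5 : 4 * (α * m) ≤ 4 * (good.card : ℝ) := by linarith [hfrac]
    rw [h1]; linarith
  -- one of the four combinations works
  have hmpos : (0 : ℝ) < m := by exact_mod_cast hm
  have hchoice : ∃ s t : ℝ, |s| ≤ 1 ∧ |t| ≤ 1 ∧ α * m ≤ E s t := by
    by_contra h
    push_neg at h
    have h11 := h 1 1 (by norm_num) (by norm_num)
    have h12 := h 1 (-1) (by norm_num) (by norm_num)
    have h21 := h (-1) 1 (by norm_num) (by norm_num)
    have h22 := h (-1) (-1) (by norm_num) (by norm_num)
    linarith
  obtain ⟨s, t, hs, ht, hEst⟩ := hchoice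
  refine ⟨X s t, hbound s t hs ht, ?_⟩
  rw [ge_iff_le, one_div, inv_mul_eq_div]
  have h1 : α ≤ E s t / m := (le_div_iff₀ hmpos).mpr hEst
  have h2 : E s t = ∑ i : Fin m,
      (f (restrict (X s t) (A i)) (A i) (B i)
        - (∑ j ∈ B i, X s t j) / (B i).card) ^ 2 := rfl
  rw [h2] at h1
  linarith
end

section
/- Let W ⊆ ℝⁿ be a linear subspace, b ∈ ℝⁿ, a ∈ W, and r > 0 with β := ‖Π_{W^⊥} b‖₂² ≤ r². Define λ = min{1, √((r² − β)/‖a − Π_W b‖₂²)} (taking λ = 1 if a = Π_W b), and a' = λ a + (1 − λ) Π_W b. Then a' is the closest point in {w ∈ W : ‖w − b‖₂ ≤ r} to a. -/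
/-!
For `w ∈ W` Pythagoras gives `‖w - b‖² = ‖w - Π_W b‖² + β`, so the feasible set is the ball in `W`
of radius `ρ = √(r² - β)` about `Π_W b`. The point `a' = Π_W b + λ (a - Π_W b)` satisfies
`λ ‖a - Π_W b‖ = min ‖a - Π_W b‖ ρ`, i.e. it is the radial projection of `a` onto that ball, and
the radial projection onto a ball is a nearest point in any normed space by the triangle inequality.
-/

open AffineMap Metric

section Pythagoras

variable {E : Type*} [NormedAddCommGroup E] [InnerProductSpace ℝ E]
  (K : Submodule ℝ E) [K.HasOrthogonalProjection]

theorem Submodule.norm_sub_sq_eq_norm_sub_starProjection_sq_add {w : E} (hw : w ∈ K) (b : E) :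
    ‖w - b‖ ^ 2 = ‖w - K.starProjection b‖ ^ 2 + ‖Kᗮ.starProjection b‖ ^ 2 := by
  have hK : K.starProjection (w - b) = w - K.starProjection b := by
    rw [map_sub, K.starProjection_eq_self_iff.mpr hw]
  have hKperp : Kᗮ.starProjection (w - b) = -Kᗮ.starProjection b := by
    rw [map_sub, Kᗮ.starProjection_apply_eq_zero_iff.mpr (K.le_orthogonal_orthogonal hw), zero_sub]
  rw [norm_sq_eq_add_norm_sq_starProjection (w - b) K, hK, hKperp, norm_neg]

theorem Submodule.norm_sub_le_iff_norm_sub_starProjection_le {w : E} (hw : w ∈ K) (b : E)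
    {r : ℝ} (hr : 0 ≤ r) (hbr : ‖Kᗮ.starProjection b‖ ^ 2 ≤ r ^ 2) :
    ‖w - b‖ ≤ r ↔ ‖w - K.starProjection b‖ ≤ √(r ^ 2 - ‖Kᗮ.starProjection b‖ ^ 2) := by
  rw [Real.le_sqrt (norm_nonneg _) (sub_nonneg.mpr hbr), le_sub_iff_add_le,
    ← K.norm_sub_sq_eq_norm_sub_starProjection_sq_add hw, sq_le_sq₀ (norm_nonneg _) hr]

end Pythagoras

section BallProjection

variable {E : Type*} [NormedAddCommGroup E] [NormedSpace ℝ E]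

theorem dist_lineMap_le_of_mul_dist_eq_min {c x z : E} {t ρ : ℝ} (ht : t ≤ 1)
    (htx : t * dist x c = min (dist x c) ρ) (hz : dist z c ≤ ρ) :
    dist x (lineMap c x t) ≤ dist x z := by
  have hxz : dist x c - ρ ≤ dist x z := by linarith [dist_triangle x z c]
  calc dist x (lineMap c x t) = dist x c - min (dist x c) ρ := by
        rw [dist_comm, dist_lineMap_right, Real.norm_of_nonneg (sub_nonneg.mpr ht), dist_comm c x,
          sub_mul, one_mul, htx]
    _ ≤ dist x z := by
        rcases min_cases (dist x c) ρ with ⟨h, _⟩ | ⟨h, _⟩ <;> rw [h]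
        · simp
        · exact hxz

theorem lineMap_mem_closedBall_of_mul_dist_eq_min {c x : E} {t ρ : ℝ} (ht : 0 ≤ t)
    (htx : t * dist x c = min (dist x c) ρ) : lineMap c x t ∈ closedBall c ρ := by
  rw [mem_closedBall, dist_lineMap_left, Real.norm_of_nonneg ht, dist_comm c x, htx]
  exact min_le_right _ _

end BallProjection

theorem Real.min_one_sqrt_div_sq_mul {D : ℝ} (hD : 0 < D) (s : ℝ) :
    min 1 √(s / D ^ 2) * D = min D √s := by
  rw [Real.sqrt_div' _ (sq_nonneg D), Real.sqrt_sq hD.le, min_mul_of_nonneg _ _ hD.le, one_mul,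
    div_mul_cancel₀ _ hD.ne']

/-- The rescaling step of the algorithms computes the projection onto the intersection of the
subspace `W` with the ball of radius `r` around `b`. -/
theorem rescale_is_projection (n : ℕ)
    (W : Submodule ℝ (EuclideanSpace ℝ (Fin n)))
    (b : EuclideanSpace ℝ (Fin n)) (a : EuclideanSpace ℝ (Fin n)) (ha : a ∈ W)
    (r β : ℝ) (hr : 0 < r)
    (hβ : β = ‖(Submodule.orthogonalProjectionOnto Wᗮ b : EuclideanSpace ℝ (Fin n))‖ ^ 2)
    (hβr : β ≤ r ^ 2)
    (lam : ℝ)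
    (hlam : lam = if a = (Submodule.orthogonalProjectionOnto W b : EuclideanSpace ℝ (Fin n)) then 1
      else min 1 (Real.sqrt ((r ^ 2 - β) /
        ‖a - (Submodule.orthogonalProjectionOnto W b : EuclideanSpace ℝ (Fin n))‖ ^ 2)))
    (a' : EuclideanSpace ℝ (Fin n))
    (ha' : a' = lam • a + (1 - lam) • (Submodule.orthogonalProjectionOnto W b : EuclideanSpace ℝ (Fin n))) :
    (a' ∈ W ∧ ‖a' - b‖ ≤ r) ∧
      ∀ w : EuclideanSpace ℝ (Fin n), w ∈ W → ‖w - b‖ ≤ r → ‖a - a'‖ ≤ ‖a - w‖ := by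
  set p : EuclideanSpace ℝ (Fin n) := (W.orthogonalProjectionOnto b : EuclideanSpace ℝ (Fin n))
  set ρ := √(r ^ 2 - β)
  have hfeasible : ∀ w ∈ W, ‖w - b‖ ≤ r ↔ dist w p ≤ ρ := fun w hw => by
    subst hβ
    exact dist_eq_norm w p ▸ W.norm_sub_le_iff_norm_sub_starProjection_le hw b hr.le hβr
  have ha'_lineMap : a' = lineMap p a lam := by rw [ha', lineMap_apply_module, add_comm]
  have hlam_le_one : lam ≤ 1 := by rw [hlam]; split_ifs <;> simp
  have hlam_nonneg : 0 ≤ lam := by rw [hlam]; split_ifs <;> positivity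
  have hlam_dist : lam * dist a p = min (dist a p) ρ := by
    rw [hlam]
    split_ifs with hap
    · simp [hap, ρ]
    · rw [dist_eq_norm]
      exact Real.min_one_sqrt_div_sq_mul (norm_sub_pos_iff.mpr hap) _
  have ha'W : a' ∈ W :=
    ha' ▸ W.add_mem (W.smul_mem _ ha) (W.smul_mem _ (W.starProjection_apply_mem b))
  refine ⟨⟨ha'W, (hfeasible a' ha'W).mpr ?_⟩, fun w hw hwb => ?_⟩
  · rw [ha'_lineMap, ← mem_closedBall]
    exact lineMap_mem_closedBall_of_mul_dist_eq_min hlam_nonneg hlam_dist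
  · rw [← dist_eq_norm, ← dist_eq_norm, ha'_lineMap]
    exact dist_lineMap_le_of_mul_dist_eq_min hlam_le_one hlam_dist ((hfeasible w hw).mp hwb)
end

section
/- Let f_1, …, f_T : K → ℝ be convex differentiable functions on a closed convex set K ⊆ ℝ^d of diameter at most D, with ‖∇f_t(x)‖₂ ≤ G for all x ∈ K and all t. Let x_1 ∈ K be arbitrary and define x_{t+1} = Proj_K(x_t − η_t ∇f_t(x_t)) with step sizes η_t = D/(G√t). Then (1/T) Σ_{t=1}^T f_t(x_t) − min_{x ∈ K} (1/T) Σ_{t=1}^T f_t(x) ≤ 3GD/(2√T). -/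
/-!
Convexity bounds the regret of round `t` against `z ∈ K` by `⟪∇f_t(x_t), x_t - z⟫`. Projecting
onto a convex set does not increase the distance to `z`, so expanding
`‖x_t - η_t ∇f_t(x_t) - z‖²` gives
`2 η_t ⟪∇f_t(x_t), x_t - z⟫ ≤ ‖x_t - z‖² - ‖x_{t+1} - z‖² + η_t² G²`.
After dividing by `2 η_t` and summing, the distance terms telescope against the nondecreasing
weights `1 / η_t` to at most `D² / (2 η_T) = G D √T / 2`, and the rest is
`(G² / 2) ∑ η_t ≤ G D √T`, because `∑_{t ≤ T} 1 / √t ≤ 2 √T`.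
-/

open Finset RealInnerProductSpace

theorem ConvexOn.fderiv_sub_le {E : Type*} [NormedAddCommGroup E] [NormedSpace ℝ E]
    {K : Set E} {f : E → ℝ} (hf : ConvexOn ℝ K f) {x z : E} (hx : x ∈ K) (hz : z ∈ K)
    (hdiff : DifferentiableAt ℝ f x) :
    fderiv ℝ f x (z - x) ≤ f z - f x := by
  have hline : ConvexOn ℝ (Set.Icc (0 : ℝ) 1) (f ∘ AffineMap.lineMap x z) :=
    (hf.comp_affineMap _).subset (fun _ hs ↦ hf.1.lineMap_mem hx hz hs) (convex_Icc 0 1)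
  have hderiv : HasDerivAt (f ∘ AffineMap.lineMap x z) (fderiv ℝ f x (z - x)) (0 : ℝ) := by
    have hf' : HasFDerivAt f (fderiv ℝ f x) (AffineMap.lineMap x z (0 : ℝ)) := by
      simpa using hdiff.hasFDerivAt
    exact hf'.comp_hasDerivAt 0 AffineMap.hasDerivAt_lineMap
  simpa [slope] using hline.le_slope_of_hasDerivAt (by simp) (by simp) zero_lt_one hderiv

theorem sum_Icc_sub_div_le {a η : ℕ → ℝ} {M : ℝ} {N : ℕ} (hN : 1 ≤ N)
    (hη : ∀ t ∈ Icc 1 N, 0 < η t) (hη_anti : AntitoneOn η (Icc 1 N))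
    (ha : ∀ t ∈ Icc 1 N, a t ≤ M) :
    ∑ t ∈ Icc 1 N, (a t - a (t + 1)) / η t ≤ (M - a (N + 1)) / η N := by
  induction N, hN using Nat.le_induction with
  | base =>
    simp only [Icc_self, sum_singleton]
    gcongr
    · exact (hη 1 (by simp)).le
    · exact ha 1 (by simp)
  | succ N hN ih =>
    have hsub : Icc 1 N ⊆ Icc 1 (N + 1) := Icc_subset_Icc_right N.le_succ
    have hN_mem : N ∈ Icc 1 (N + 1) := mem_Icc.2 ⟨hN, N.le_succ⟩
    have hN1_mem : N + 1 ∈ Icc 1 (N + 1) := mem_Icc.2 ⟨by omega, le_rfl⟩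
    have ih := ih (fun t ht ↦ hη t (hsub ht)) (hη_anti.mono hsub) (fun t ht ↦ ha t (hsub ht))
    have hinv : (M - a (N + 1)) / η N ≤ (M - a (N + 1)) / η (N + 1) :=
      div_le_div_of_nonneg_left (sub_nonneg.2 (ha _ hN1_mem)) (hη _ hN1_mem)
        (hη_anti hN_mem hN1_mem N.le_succ)
    rw [sum_Icc_succ_top (by omega)]
    calc _ ≤ (M - a (N + 1)) / η (N + 1) + (a (N + 1) - a (N + 1 + 1)) / η (N + 1) := by
          linarith
      _ = (M - a (N + 1 + 1)) / η (N + 1) := by ring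

theorem sum_Icc_one_div_sqrt_le (N : ℕ) : ∑ t ∈ Icc 1 N, 1 / √(t : ℝ) ≤ 2 * √(N : ℝ) := by
  induction N with
  | zero => simp
  | succ N ih =>
    rw [sum_Icc_succ_top (by omega)]
    have hpos : 0 < √((N + 1 : ℕ) : ℝ) := Real.sqrt_pos.2 (by positivity)
    have hsq : √((N + 1 : ℕ) : ℝ) ^ 2 = √(N : ℝ) ^ 2 + 1 := by
      rw [Real.sq_sqrt (by positivity), Real.sq_sqrt (by positivity)]; push_cast; ring
    have hstep : 1 / √((N + 1 : ℕ) : ℝ) ≤ 2 * √((N + 1 : ℕ) : ℝ) - 2 * √(N : ℝ) := by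
      rw [div_le_iff₀ hpos]
      nlinarith [sq_nonneg (√((N + 1 : ℕ) : ℝ) - √(N : ℝ))]
    linarith

section InnerProductSpace

variable {E : Type*} [NormedAddCommGroup E] [InnerProductSpace ℝ E]

theorem ConvexOn.sub_le_inner_gradient [CompleteSpace E] {K : Set E} {f : E → ℝ}
    (hf : ConvexOn ℝ K f) {x z : E} (hx : x ∈ K) (hz : z ∈ K) (hdiff : DifferentiableAt ℝ f x) :
    f x - f z ≤ ⟪gradient f x, x - z⟫ := by
  have hfirst := hf.fderiv_sub_le hx hz hdiff
  rw [inner_gradient_left, ← neg_sub z x, map_neg]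
  linarith

theorem Convex.norm_sub_le_of_forall_norm_sub_le {K : Set E} (hK : Convex ℝ K) {u v z : E}
    (hv : v ∈ K) (hz : z ∈ K) (hmin : ∀ y ∈ K, ‖u - v‖ ≤ ‖u - y‖) :
    ‖v - z‖ ≤ ‖u - z‖ := by
  have : Nonempty K := ⟨⟨v, hv⟩⟩
  have hobtuse : ⟪u - v, z - v⟫ ≤ 0 := by
    refine (norm_eq_iInf_iff_real_inner_le_zero hK hv).1 ?_ z hz
    exact le_antisymm (le_ciInf fun w ↦ hmin w w.2)
      (ciInf_le ⟨0, Set.forall_mem_range.2 fun w : K ↦ norm_nonneg (u - w)⟩ ⟨v, hv⟩)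
  have hexpand : ‖u - z‖ ^ 2 = ‖u - v‖ ^ 2 - 2 * ⟪u - v, z - v⟫ + ‖v - z‖ ^ 2 := by
    rw [norm_sub_rev v z, ← norm_sub_sq_real, sub_sub_sub_cancel_right]
  refine le_of_sq_le_sq ?_ (norm_nonneg _)
  nlinarith [sq_nonneg ‖u - v‖]

theorem Convex.two_mul_inner_le_of_projected_step {K : Set E} (hK : Convex ℝ K)
    {x g x' z : E} {η : ℝ} (hx' : x' ∈ K) (hz : z ∈ K)
    (hnear : ∀ y ∈ K, ‖x - η • g - x'‖ ≤ ‖x - η • g - y‖) :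
    2 * η * ⟪g, x - z⟫ ≤ ‖x - z‖ ^ 2 - ‖x' - z‖ ^ 2 + η ^ 2 * ‖g‖ ^ 2 := by
  have hcontract := pow_le_pow_left₀ (norm_nonneg _)
    (hK.norm_sub_le_of_forall_norm_sub_le hx' hz hnear) 2
  have hexpand : ‖x - η • g - z‖ ^ 2 = ‖x - z‖ ^ 2 - 2 * η * ⟪g, x - z⟫ + η ^ 2 * ‖g‖ ^ 2 := by
    rw [sub_right_comm, norm_sub_sq_real, real_inner_smul_right, norm_smul, real_inner_comm,
      mul_pow, Real.norm_eq_abs, sq_abs]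
    ring
  linarith

theorem sum_inner_le_of_projected_gradient_steps {K : Set E} (hK : Convex ℝ K)
    {x g : ℕ → E} {η : ℕ → ℝ} {z : E} {D G : ℝ} {T : ℕ} (hT : 1 ≤ T) (hz : z ∈ K)
    (hxz : ∀ t ∈ Icc 1 T, ‖x t - z‖ ≤ D) (hg : ∀ t ∈ Icc 1 T, ‖g t‖ ≤ G)
    (hη : ∀ t ∈ Icc 1 T, 0 < η t) (hη_anti : AntitoneOn η (Icc 1 T))
    (hstep : ∀ t ∈ Icc 1 T,
      x (t + 1) ∈ K ∧ ∀ y ∈ K, ‖x t - η t • g t - x (t + 1)‖ ≤ ‖x t - η t • g t - y‖) :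
    ∑ t ∈ Icc 1 T, ⟪g t, x t - z⟫ ≤ D ^ 2 / (2 * η T) + G ^ 2 / 2 * ∑ t ∈ Icc 1 T, η t := by
  set a : ℕ → ℝ := fun t ↦ ‖x t - z‖ ^ 2
  have hstep_bound : ∀ t ∈ Icc 1 T,
      ⟪g t, x t - z⟫ ≤ (a t - a (t + 1)) / η t / 2 + G ^ 2 / 2 * η t := by
    intro t ht
    have hη_t := hη t ht
    have hinner := hK.two_mul_inner_le_of_projected_step (hstep t ht).1 hz (hstep t ht).2
    have hg2 : ‖g t‖ ^ 2 ≤ G ^ 2 := pow_le_pow_left₀ (norm_nonneg _) (hg t ht) 2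
    have hrhs : 2 * η t * ((a t - a (t + 1)) / η t / 2 + G ^ 2 / 2 * η t)
        = a t - a (t + 1) + η t ^ 2 * G ^ 2 := by
      field_simp
    rw [← mul_le_mul_iff_of_pos_left (by positivity : 0 < 2 * η t), hrhs]
    linarith [mul_le_mul_of_nonneg_left hg2 (sq_nonneg (η t))]
  have htelescope := sum_Icc_sub_div_le hT hη hη_anti
    (fun t ht ↦ pow_le_pow_left₀ (norm_nonneg _) (hxz t ht) 2 : ∀ t ∈ Icc 1 T, a t ≤ D ^ 2)
  have ha_nonneg : 0 ≤ a (T + 1) := by positivity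
  have hηT := hη T (mem_Icc.2 ⟨hT, le_rfl⟩)
  calc ∑ t ∈ Icc 1 T, ⟪g t, x t - z⟫
      ≤ ∑ t ∈ Icc 1 T, ((a t - a (t + 1)) / η t / 2 + G ^ 2 / 2 * η t) := sum_le_sum hstep_bound
    _ = (∑ t ∈ Icc 1 T, (a t - a (t + 1)) / η t) / 2 + G ^ 2 / 2 * ∑ t ∈ Icc 1 T, η t := by
      rw [sum_add_distrib, sum_div, mul_sum]
    _ ≤ (D ^ 2 - a (T + 1)) / η T / 2 + G ^ 2 / 2 * ∑ t ∈ Icc 1 T, η t := by gcongr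
    _ ≤ D ^ 2 / (2 * η T) + G ^ 2 / 2 * ∑ t ∈ Icc 1 T, η t := by
      rw [div_div, mul_comm (η T)]; gcongr; linarith

end InnerProductSpace

theorem ogd_regret_general (d T : ℕ) (hT : 0 < T)
    (K : Set (EuclideanSpace ℝ (Fin d))) (hKconv : Convex ℝ K)
    (D G : ℝ) (hD : 0 < D) (hG : 0 < G)
    (hdiam : ∀ x ∈ K, ∀ y ∈ K, ‖x - y‖ ≤ D)
    (f : ℕ → EuclideanSpace ℝ (Fin d) → ℝ)
    (hconv : ∀ t, ConvexOn ℝ K (f t))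
    (hdiff : ∀ t, ∀ x ∈ K, DifferentiableAt ℝ (f t) x)
    (hgrad : ∀ t, ∀ x ∈ K, ‖gradient (f t) x‖ ≤ G)
    (x : ℕ → EuclideanSpace ℝ (Fin d)) (hx1 : x 1 ∈ K)
    (hstep : ∀ t, 1 ≤ t → t ≤ T →
      x (t + 1) ∈ K ∧
      ∀ y ∈ K, ‖(x t - (D / (G * Real.sqrt t)) • gradient (f t) (x t)) - x (t + 1)‖
        ≤ ‖(x t - (D / (G * Real.sqrt t)) • gradient (f t) (x t)) - y‖) :
    ∀ z ∈ K,
      (1 / (T : ℝ)) * ∑ t ∈ Finset.Icc 1 T, f t (x t)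
        - (1 / (T : ℝ)) * ∑ t ∈ Finset.Icc 1 T, f t z
      ≤ 3 * G * D / (2 * Real.sqrt T) := by
  intro z hz
  set η : ℕ → ℝ := fun t ↦ D / (G * √(t : ℝ))
  have hstep' : ∀ t ∈ Icc 1 T, x (t + 1) ∈ K ∧ ∀ y ∈ K,
      ‖x t - η t • gradient (f t) (x t) - x (t + 1)‖
        ≤ ‖x t - η t • gradient (f t) (x t) - y‖ := fun t ht ↦
    hstep t (mem_Icc.1 ht).1 (mem_Icc.1 ht).2
  have hxK : ∀ t ∈ Icc 1 T, x t ∈ K := by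
    intro t ht
    obtain ⟨h1, h2⟩ := mem_Icc.1 ht
    rcases h1.eq_or_lt with rfl | h1
    · exact hx1
    · simpa [Nat.sub_add_cancel h1.le] using (hstep' (t - 1) (mem_Icc.2 ⟨by omega, by omega⟩)).1
  have hη : ∀ t ∈ Icc 1 T, 0 < η t := fun t ht ↦ by
    have : (0 : ℝ) < t := by exact_mod_cast (mem_Icc.1 ht).1
    positivity
  have hη_anti : AntitoneOn η (Icc 1 T) := fun s hs t ht hst ↦ by
    have : (0 : ℝ) < s := by exact_mod_cast (mem_Icc.1 hs).1
    dsimp only [η]; gcongr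
  have hη_sum : ∑ t ∈ Icc 1 T, η t ≤ D / G * (2 * √(T : ℝ)) := by
    simp only [η, div_mul_eq_div_div, div_eq_mul_one_div (D / G), ← mul_sum]
    exact mul_le_mul_of_nonneg_left (sum_Icc_one_div_sqrt_le T) (by positivity)
  have hregret := sum_inner_le_of_projected_gradient_steps hKconv hT hz
    (fun t ht ↦ hdiam _ (hxK t ht) z hz) (fun t ht ↦ hgrad t _ (hxK t ht)) hη hη_anti hstep'
  have hlinear : ∑ t ∈ Icc 1 T, (f t (x t) - f t z)
      ≤ ∑ t ∈ Icc 1 T, ⟪gradient (f t) (x t), x t - z⟫ :=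
    sum_le_sum fun t ht ↦ (hconv t).sub_le_inner_gradient (hxK t ht) hz (hdiff t _ (hxK t ht))
  have hsqrtT : 0 < √(T : ℝ) := Real.sqrt_pos.2 (by exact_mod_cast hT)
  rw [← mul_sub, ← sum_sub_distrib]
  calc 1 / (T : ℝ) * ∑ t ∈ Icc 1 T, (f t (x t) - f t z)
      ≤ 1 / (T : ℝ) * (D ^ 2 / (2 * η T) + G ^ 2 / 2 * (D / G * (2 * √(T : ℝ)))) := by
        gcongr
        linarith [mul_le_mul_of_nonneg_left hη_sum (by positivity : (0 : ℝ) ≤ G ^ 2 / 2)]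
    _ = 3 * G * D / (2 * √(T : ℝ)) := by
        simp only [η]
        field_simp
        rw [Real.sq_sqrt (Nat.cast_nonneg T)]
        ring

/-- The standard regret bound for online gradient descent with step sizes `η_t = D/(G√t)`. -/
theorem ogd_regret (d T : ℕ) (hT : 0 < T)
    (K : Set (EuclideanSpace ℝ (Fin d))) (hKc : IsClosed K) (hKconv : Convex ℝ K)
    (D G : ℝ) (hD : 0 < D) (hG : 0 < G)
    (hdiam : ∀ x ∈ K, ∀ y ∈ K, ‖x - y‖ ≤ D)
    (f : ℕ → EuclideanSpace ℝ (Fin d) → ℝ)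
    (hconv : ∀ t, ConvexOn ℝ K (f t))
    (hdiff : ∀ t, ∀ x ∈ K, DifferentiableAt ℝ (f t) x)
    (hgrad : ∀ t, ∀ x ∈ K, ‖gradient (f t) x‖ ≤ G)
    (x : ℕ → EuclideanSpace ℝ (Fin d)) (hx1 : x 1 ∈ K)
    (hstep : ∀ t, 1 ≤ t → t ≤ T →
      x (t + 1) ∈ K ∧
      ∀ y ∈ K, ‖(x t - (D / (G * Real.sqrt t)) • gradient (f t) (x t)) - x (t + 1)‖
        ≤ ‖(x t - (D / (G * Real.sqrt t)) • gradient (f t) (x t)) - y‖) :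
    ∀ z ∈ K,
      (1 / (T : ℝ)) * ∑ t ∈ Finset.Icc 1 T, f t (x t)
        - (1 / (T : ℝ)) * ∑ t ∈ Finset.Icc 1 T, f t z
      ≤ 3 * G * D / (2 * Real.sqrt T) :=
  ogd_regret_general d T hT K hKconv D G hD hG hdiam f hconv hdiff hgrad x hx1 hstep
end
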